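/- Let (R,B) be a fusion ring with a fixed-point-free automorphism φ of prime order p such that B has exactly two φ-orbits (so rank(R) = p + 1). Then every basis element of R is invertible, i.e., R ≅ ℤG for a finite group G of order p + 1; moreover G is an elementary abelian q-group for some prime q. -/

import Mathlib

/-!
The Frobenius–Perron dimension is the unique positive character, so it is invariant under `φ`
and therefore constant, say `δ`, on the single nontrivial orbit. Expanding `x y` with `y ≠ x*`
and `x x*` in the basis gives `δ² = M δ` and `δ² = N δ + 1 - δ` with `M, N ∈ ℕ`, so `δ = M`
divides `1`. Once all dimensions are `1`, products of basis elements are basis elements and the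
basis is a group `G` on whose nontrivial elements the powers of `φ` act transitively. Then all
nontrivial elements share one prime order `q`, so `G` is a `q`-group, and its nontrivial centre,
being characteristic, is all of `G`.
-/

open Finset

/-- A fusion ring with basis indexed by `Fin n`, given by its structure
constants `c`, distinguished unit basis element `one`, and duality `dual`. -/
structure FusionData (n : ℕ) where
  c : Fin n → Fin n → Fin n → ℕ
  one : Fin n
  dual : Fin n → Fin n
  dual_dual : ∀ i, dual (dual i) = i
  c_one_left : ∀ i k, c one i k = if k = i then 1 else 0
  c_one_right : ∀ i k, c i one k = if k = i then 1 else 0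
  c_dual : ∀ i j, c i j one = if j = dual i then 1 else 0
  assoc : ∀ i j l m, ∑ k, c i j k * c k l m = ∑ k, c j l k * c i k m

/-- `d` is the Frobenius–Perron dimension function: the (unique) ring
homomorphism `R → ℝ` positive on the basis. -/
def FusionData.IsFPdim {n : ℕ} (F : FusionData n) (d : Fin n → ℝ) : Prop :=
  (∀ i, 0 < d i) ∧ ∀ i j, d i * d j = ∑ k, (F.c i j k : ℝ) * d k

/-- `φ` is a fusion-ring automorphism: a permutation of the basis fixing the
unit and preserving the structure constants. -/
def FusionData.IsAut {n : ℕ} (F : FusionData n) (φ : Equiv.Perm (Fin n)) : Prop :=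
  φ F.one = F.one ∧ ∀ i j k, F.c (φ i) (φ j) (φ k) = F.c i j k

/-- `φ` is fixed-point-free: the unit is its only fixed basis element. -/
def FusionData.Fpf {n : ℕ} (F : FusionData n) (φ : Equiv.Perm (Fin n)) : Prop :=
  ∀ i, φ i = i → i = F.one

/-- A character of the fusion ring: a unital ring homomorphism `R → ℂ`,
recorded via its values on the basis. -/
def FusionData.IsChar {n : ℕ} (F : FusionData n) (χ : Fin n → ℂ) : Prop :=
  χ F.one = 1 ∧ ∀ i j, χ i * χ j = ∑ k, (F.c i j k : ℂ) * χ k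


section MulAutTransitive

variable {G : Type*} [Group G] [Finite G]

theorem exists_prime_forall_pow_eq_one_of_mulAut_transitive
    (htrans : ∀ x y : G, x ≠ 1 → y ≠ 1 → ∃ σ : MulAut G, σ x = y) :
    ∃ q : ℕ, q.Prime ∧ ∀ a : G, a ^ q = 1 := by
  rcases subsingleton_or_nontrivial G with hG | hG
  · exact ⟨2, Nat.prime_two, fun a => Subsingleton.elim _ _⟩
  set q := (Nat.card G).minFac
  have hq : q.Prime := Nat.minFac_prime Finite.one_lt_card.ne'
  have : Fact q.Prime := ⟨hq⟩
  obtain ⟨g, hg⟩ := exists_prime_orderOf_dvd_card' q (Nat.minFac_dvd _)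
  have hg1 : g ≠ 1 := fun h => hq.ne_one (by rw [← hg, h, orderOf_one])
  refine ⟨q, hq, fun a => ?_⟩
  rcases eq_or_ne a 1 with rfl | ha
  · exact one_pow q
  obtain ⟨σ, rfl⟩ := htrans g a hg1 ha
  rw [← hg, ← σ.orderOf_eq, pow_orderOf_eq_one]

theorem mul_comm_of_mulAut_transitive
    (htrans : ∀ x y : G, x ≠ 1 → y ≠ 1 → ∃ σ : MulAut G, σ x = y) (a b : G) :
    a * b = b * a := by
  rcases eq_or_ne a 1 with rfl | ha
  · rw [one_mul, mul_one]
  have : Nontrivial G := ⟨⟨a, 1, ha⟩⟩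
  obtain ⟨q, hq, hpow⟩ := exists_prime_forall_pow_eq_one_of_mulAut_transitive htrans
  have : Fact q.Prime := ⟨hq⟩
  have hG : IsPGroup q G := fun g => ⟨1, by rw [pow_one, hpow]⟩
  have := hG.center_nontrivial
  obtain ⟨⟨z, hz⟩, hz1⟩ := exists_ne (1 : Subgroup.center G)
  obtain ⟨σ, rfl⟩ := htrans z a (fun h => hz1 (Subtype.ext h)) ha
  have hσz : σ z ∈ Subgroup.center G :=
    Subgroup.characteristic_iff_le_comap.mp inferInstance σ hz
  exact (Subgroup.mem_center_iff.mp hσz b).symm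

end MulAutTransitive

theorem Fintype.exists_eq_ite_of_sum_eq_one {ι : Type*} [Fintype ι] [DecidableEq ι] {f : ι → ℕ}
    (h : ∑ i, f i = 1) : ∃ i₀, ∀ i, f i = if i = i₀ then 1 else 0 := by
  obtain ⟨i₀, hi₀⟩ := (Finsupp.equivFunOnFinite.symm f).sum_eq_one_iff.mp
    (by rwa [Finsupp.sum_fintype _ _ fun _ => rfl])
  refine ⟨i₀, fun i => ?_⟩
  rw [← Finsupp.coe_equivFunOnFinite_symm f, hi₀, Finsupp.single_apply]
  simp only [eq_comm]

-- `Fin n` without its own arithmetic, so that a group law on the basis can be installed on it.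
def FusionBasis (n : ℕ) : Type := Fin n

instance (n : ℕ) : Finite (FusionBasis n) := inferInstanceAs (Finite (Fin n))

namespace FusionData

variable {n : ℕ} {F : FusionData n}

def IsBasisMul (F : FusionData n) (mul : Fin n → Fin n → Fin n) : Prop :=
  ∀ i j k, F.c i j k = if k = mul i j then 1 else 0

theorem dual_involutive (F : FusionData n) : Function.Involutive F.dual := F.dual_dual

theorem dual_one (F : FusionData n) : F.dual F.one = F.one := by
  have h := F.c_dual F.one F.one
  rw [F.c_one_left, if_pos rfl] at h
  by_contra hne
  rw [if_neg (Ne.symm hne)] at h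
  exact one_ne_zero h

theorem dual_ne_one {i : Fin n} (hi : i ≠ F.one) : F.dual i ≠ F.one := fun h =>
  hi (by rw [← F.dual_dual i, h, dual_one])

theorem c_eq_c_dual (i j m : Fin n) : F.c i j m = F.c j (F.dual m) (F.dual i) := by
  have h := F.assoc i j (F.dual m) F.one
  simp only [F.c_dual, F.dual_involutive.injective.eq_iff, mul_ite, mul_one, mul_zero,
    sum_ite_eq, sum_ite_eq', mem_univ, if_true] at h
  exact h

theorem c_dual_left_dual_right (i j k : Fin n) :
    F.c (F.dual k) j (F.dual i) = F.c j i k := by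
  rw [c_eq_c_dual, F.dual_dual, F.dual_dual]

section FPdim

variable {d d' : Fin n → ℝ} {φ : Equiv.Perm (Fin n)}

theorem IsAut.pow (hφ : F.IsAut φ) (k : ℕ) : F.IsAut (φ ^ k) := by
  induction k with
  | zero => exact ⟨rfl, fun _ _ _ => rfl⟩
  | succ k ih =>
    refine ⟨?_, fun i j l => ?_⟩
    · rw [pow_succ, Equiv.Perm.mul_apply, hφ.1, ih.1]
    · simp only [pow_succ, Equiv.Perm.mul_apply, ih.2, hφ.2]

theorem IsFPdim.apply_one (hd : F.IsFPdim d) : d F.one = 1 := by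
  have h := hd.2 F.one F.one
  simp only [F.c_one_left, Nat.cast_ite, Nat.cast_one, Nat.cast_zero, ite_mul, one_mul,
    zero_mul, sum_ite_eq', mem_univ, if_true] at h
  exact (mul_eq_right₀ (hd.1 _).ne').mp h

/- For `R = ∑ᵢ d(i*) bᵢ` one has `bⱼ R = d(j) R`; applying `d'` to both sides gives
`d'(j) d'(R) = d(j) d'(R)` with `d'(R) > 0`. -/
theorem IsFPdim.eq (hd : F.IsFPdim d) (hd' : F.IsFPdim d') : d = d' := by
  funext j
  set S := ∑ i, d' i * d (F.dual i)
  have hS : 0 < S := sum_pos (fun i _ => mul_pos (hd'.1 i) (hd.1 _)) ⟨F.one, mem_univ _⟩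
  have key : d' j * S = d j * S := calc
    d' j * S = ∑ i, d (F.dual i) * ∑ k, (F.c j i k : ℝ) * d' k := by
      rw [mul_sum]; exact sum_congr rfl fun i _ => by rw [← hd'.2]; ring
    _ = ∑ k, d' k * ∑ i, (F.c (F.dual k) j (F.dual i) : ℝ) * d (F.dual i) := by
      simp only [mul_sum, c_dual_left_dual_right]
      rw [sum_comm]; exact sum_congr rfl fun k _ => sum_congr rfl fun i _ => by ring
    _ = ∑ k, d' k * (d (F.dual k) * d j) := by
      simp only [hd.2]
      congr! 2 with k
      exact Equiv.sum_comp F.dual_involutive.toPerm fun i => (F.c (F.dual k) j i : ℝ) * d i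
    _ = d j * S := by
      rw [mul_sum]; exact sum_congr rfl fun k _ => by ring
  exact ((mul_left_inj' hS.ne').mp key).symm

theorem IsFPdim.comp_aut (hd : F.IsFPdim d) (hφ : F.IsAut φ) : F.IsFPdim (d ∘ φ) := by
  refine ⟨fun i => hd.1 (φ i), fun i j => ?_⟩
  simp only [Function.comp_apply, hd.2, ← hφ.2 i j]
  exact (Equiv.sum_comp φ fun k => (F.c (φ i) (φ j) k : ℝ) * d k).symm

theorem IsFPdim.apply_aut (hd : F.IsFPdim d) (hφ : F.IsAut φ) (i : Fin n) : d (φ i) = d i :=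
  congrFun ((hd.comp_aut hφ).eq hd) i

theorem IsFPdim.mul_eq_of_forall_ne_one (hd : F.IsFPdim d) {δ : ℝ}
    (hδ : ∀ k, k ≠ F.one → d k = δ) (i j : Fin n) :
    d i * d j = (∑ k, F.c i j k : ℕ) * δ + F.c i j F.one * (1 - δ) := by
  rw [hd.2, Nat.cast_sum, sum_mul, ← add_sum_erase _ _ (mem_univ F.one),
    ← add_sum_erase _ _ (mem_univ F.one), hd.apply_one,
    sum_congr rfl fun k hk => by rw [hδ k (ne_of_mem_erase hk)]]
  ring

theorem IsFPdim.eq_one_of_forall_ne_one (hd : F.IsFPdim d) {δ : ℝ}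
    (hδ : ∀ k, k ≠ F.one → d k = δ) {x y : Fin n} (hx : x ≠ F.one) (hy : y ≠ F.one)
    (hyx : y ≠ F.dual x) : δ = 1 := by
  have hxy := hd.mul_eq_of_forall_ne_one hδ x y
  have hxx := hd.mul_eq_of_forall_ne_one hδ x (F.dual x)
  rw [F.c_dual, if_neg hyx, hδ x hx, hδ y hy, Nat.cast_zero, zero_mul, add_zero] at hxy
  rw [F.c_dual, if_pos rfl, hδ x hx, hδ _ (dual_ne_one hx), Nat.cast_one, one_mul] at hxx
  set M := ∑ k, F.c x y k
  set N := ∑ k, F.c x (F.dual x) k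
  have hδM : δ = M := mul_right_cancel₀ (hδ x hx ▸ (hd.1 x).ne') hxy
  have hMN : M * M + M = N * M + 1 := by
    rw [hδM] at hxx
    exact_mod_cast (by linarith : (M : ℝ) * M + M = N * M + 1)
  have hM : M ∣ 1 := (Nat.dvd_add_right (dvd_mul_left M N)).mp (hMN ▸ ⟨M + 1, by ring⟩)
  rw [hδM, Nat.dvd_one.mp hM, Nat.cast_one]

theorem exists_ne_one_ne_dual (hφ : F.IsAut φ) (hfpf : F.Fpf φ) {x : Fin n} (hx : x ≠ F.one) :
    ∃ y, y ≠ F.one ∧ y ≠ F.dual x := by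
  by_cases hxx : x = F.dual x
  · exact ⟨φ x, fun h => hx (φ.injective (h.trans hφ.1.symm)),
      fun h => hx (hfpf x (h.trans hxx.symm))⟩
  · exact ⟨x, hx, hxx⟩

theorem IsFPdim.eq_one (hd : F.IsFPdim d) (hφ : F.IsAut φ) (hfpf : F.Fpf φ)
    (horb : ∀ x y, x ≠ F.one → y ≠ F.one → ∃ k : ℕ, (φ ^ k) x = y) (x : Fin n) : d x = 1 := by
  rcases eq_or_ne x F.one with rfl | hx
  · exact hd.apply_one
  have hδ : ∀ k, k ≠ F.one → d k = d x := fun k hk => by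
    obtain ⟨m, rfl⟩ := horb x k hx hk
    exact hd.apply_aut (hφ.pow m) x
  obtain ⟨y, hy, hyx⟩ := exists_ne_one_ne_dual hφ hfpf hx
  exact hd.eq_one_of_forall_ne_one hδ hx hy hyx

theorem IsFPdim.exists_isBasisMul (hd : F.IsFPdim d) (h1 : ∀ x, d x = 1) :
    ∃ mul, F.IsBasisMul mul := by
  have hsum (i j : Fin n) : ∑ k, F.c i j k = 1 := by
    have h := hd.2 i j
    simp only [h1, mul_one] at h
    exact_mod_cast h.symm
  choose mul hmul using fun i j => Fintype.exists_eq_ite_of_sum_eq_one (hsum i j)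
  exact ⟨mul, hmul⟩

end FPdim

namespace IsBasisMul

variable {mul : Fin n → Fin n → Fin n} {φ : Equiv.Perm (Fin n)}

theorem c_eq_one_iff (h : F.IsBasisMul mul) {i j k : Fin n} : F.c i j k = 1 ↔ k = mul i j := by
  rw [h]; split_ifs with hk <;> simp [hk]

theorem c_mul_left (h : F.IsBasisMul mul) (a b e m : Fin n) :
    F.c (mul a b) e m = F.c a (mul b e) m := by
  have hassoc := F.assoc a b e m
  simp only [h a b, h b e, ite_mul, _root_.one_mul, zero_mul, sum_ite_eq', mem_univ,
    if_true] at hassoc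
  exact hassoc

theorem mul_assoc (h : F.IsBasisMul mul) (a b e : Fin n) :
    mul (mul a b) e = mul a (mul b e) :=
  h.c_eq_one_iff.mp (by rw [← h.c_mul_left, h.c_eq_one_iff])

theorem one_mul (h : F.IsBasisMul mul) (a : Fin n) : mul F.one a = a :=
  (h.c_eq_one_iff.mp (by rw [F.c_one_left, if_pos rfl])).symm

theorem mul_one (h : F.IsBasisMul mul) (a : Fin n) : mul a F.one = a :=
  (h.c_eq_one_iff.mp (by rw [F.c_one_right, if_pos rfl])).symm

theorem dual_mul (h : F.IsBasisMul mul) (a : Fin n) : mul (F.dual a) a = F.one :=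
  (h.c_eq_one_iff.mp (by rw [F.c_dual, if_pos (F.dual_dual a).symm])).symm

theorem map_mul (h : F.IsBasisMul mul) (hφ : F.IsAut φ) (i j : Fin n) :
    φ (mul i j) = mul (φ i) (φ j) :=
  h.c_eq_one_iff.mp (by rw [hφ.2, h.c_eq_one_iff])

abbrev group (h : F.IsBasisMul mul) : Group (FusionBasis n) where
  mul := mul
  one := F.one
  inv := F.dual
  mul_assoc := h.mul_assoc
  one_mul := h.one_mul
  mul_one := h.mul_one
  inv_mul_cancel := h.dual_mul

theorem exists_prime_comm_exponent_of_transitive (h : F.IsBasisMul mul) (hφ : F.IsAut φ)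
    (horb : ∀ x y, x ≠ F.one → y ≠ F.one → ∃ k : ℕ, (φ ^ k) x = y) :
    ∃ q : ℕ, q.Prime ∧ (∀ i j, mul i j = mul j i) ∧ ∀ i, (mul i)^[q] F.one = F.one := by
  let := h.group
  have htrans (x y : FusionBasis n) (hx : x ≠ 1) (hy : y ≠ 1) :
      ∃ σ : MulAut (FusionBasis n), σ x = y := by
    obtain ⟨k, hk⟩ := horb x y hx hy
    exact ⟨{ toEquiv := φ ^ k, map_mul' := h.map_mul (hφ.pow k) }, hk⟩
  obtain ⟨q, hq, hpow⟩ := exists_prime_forall_pow_eq_one_of_mulAut_transitive htrans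
  refine ⟨q, hq, mul_comm_of_mulAut_transitive htrans, fun i => ?_⟩
  have hiter (a : FusionBasis n) (k : ℕ) : (mul a)^[k] F.one = a ^ k := by
    induction k with
    | zero => rfl
    | succ k ih => rw [Function.iterate_succ_apply', ih, pow_succ']; rfl
  exact (hiter i q).trans (hpow i)

end IsBasisMul

end FusionData

theorem stmt16_general {n : ℕ} (F : FusionData n)
    (φ : Equiv.Perm (Fin n)) (hA : F.IsAut φ)
    (hfpf : F.Fpf φ) (d : Fin n → ℝ) (hd : F.IsFPdim d)
    (horb : ∀ x y, x ≠ F.one → y ≠ F.one → ∃ k : ℕ, (φ ^ k) x = y) :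
    (∀ x, d x = 1) ∧
      ∃ mul : Fin n → Fin n → Fin n,
        (∀ i j k, F.c i j k = if k = mul i j then 1 else 0) ∧
        ∃ q : ℕ, q.Prime ∧ (∀ i j, mul i j = mul j i) ∧
          ∀ i, (mul i)^[q] F.one = F.one := by
  have hd1 : ∀ x, d x = 1 := hd.eq_one hA hfpf horb
  obtain ⟨mul, hmul⟩ := hd.exists_isBasisMul hd1
  exact ⟨hd1, mul, hmul, hmul.exists_prime_comm_exponent_of_transitive hA horb⟩

theorem stmt16 {n p : ℕ} (hp : p.Prime) (F : FusionData n)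
    (φ : Equiv.Perm (Fin n)) (hA : F.IsAut φ) (hord : orderOf φ = p)
    (hfpf : F.Fpf φ) (d : Fin n → ℝ) (hd : F.IsFPdim d)
    (hex : ∃ x, x ≠ F.one)
    (horb : ∀ x y, x ≠ F.one → y ≠ F.one → ∃ k : ℕ, (φ ^ k) x = y) :
    (∀ x, d x = 1) ∧
      ∃ mul : Fin n → Fin n → Fin n,
        (∀ i j k, F.c i j k = if k = mul i j then 1 else 0) ∧
        ∃ q : ℕ, q.Prime ∧ (∀ i j, mul i j = mul j i) ∧
          ∀ i, (mul i)^[q] F.one = F.one :=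
  stmt16_general F φ hA hfpf d hd horb
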